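/- The forward direction of the epigraph perturbation lemma: let φ : X → ℝ ∪ {+∞} be lower semicontinuous with φ(x₀) finite, ψ : X → ℝ continuous and strictly Fréchet differentiable at x₀ with ψ(x₀) = 0 and ψ'(x₀) = 0. If D ⊆ X × ℝ is a uniform tangent set to epi φ at (x₀, φ(x₀)), then D is a uniform tangent set to epi(φ + ψ) at (x₀, φ(x₀)). -/

import Mathlib

open Metric

/-- `D` is a uniform tangent set to `E` at `e₀` (with the ambient norm). -/
def IsUniformTangentSet {Y : Type*} [NormedAddCommGroup Y] [NormedSpace ℝ Y]
    (E : Set Y) (e₀ : Y) (D : Set Y) : Prop :=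
  Bornology.IsBounded D ∧
    ∀ ε > (0:ℝ), ∃ δ > (0:ℝ), ∀ d ∈ D, ∀ e ∈ E, ‖e - e₀‖ ≤ δ →
      ∃ lam > (0:ℝ), ∀ t ∈ Set.Icc (0:ℝ) lam,
        ∃ b : Y, ‖b‖ ≤ 1 ∧ e + t • (d + ε • b) ∈ E

/-!
The shear `(x, p) ↦ (x, p - ψ x)` maps `epi (φ + ψ)` into `epi φ` and fixes `(x₀, r)`; its inverse
`(x, p) ↦ (x, p + ψ x)` is strictly differentiable at `(x₀, r)` with derivative the identity.
Pulling a segment `e + t • (d + (ε / 2) • b)` of `epi φ` back through the inverse therefore moves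
it by `o(t)` uniformly in `d ∈ D`, an error the other half of the slack `ε` absorbs.
-/

section

variable {Y : Type*} [NormedAddCommGroup Y] [NormedSpace ℝ Y]

lemma exists_norm_le_one_smul_add_smul_add_eq {ε₁ ε₂ ε t : ℝ} (hε₁ : 0 ≤ ε₁) (hε : 0 < ε)
    (hsum : ε₁ + ε₂ ≤ ε) (ht : 0 ≤ t) (d b w : Y) (hb : ‖b‖ ≤ 1) (hw : ‖w‖ ≤ t * ε₂) :
    ∃ b' : Y, ‖b'‖ ≤ 1 ∧ t • (d + ε₁ • b) + w = t • (d + ε • b') := by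
  rcases ht.eq_or_lt with rfl | ht
  · exact ⟨0, by simp, by simpa using hw⟩
  refine ⟨(ε₁ / ε) • b + (t * ε)⁻¹ • w, ?_, ?_⟩
  · calc ‖(ε₁ / ε) • b + (t * ε)⁻¹ • w‖ ≤ ε₁ / ε * 1 + (t * ε)⁻¹ * (t * ε₂) := by
          refine (norm_add_le _ _).trans (add_le_add ?_ ?_) <;>
            rw [norm_smul, Real.norm_of_nonneg] <;> first | positivity | gcongr
      _ ≤ 1 := by
          rw [mul_one, ← div_eq_inv_mul, mul_div_mul_left _ _ ht.ne', ← add_div,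
            div_le_one hε]
          exact hsum
  · have hcancel : t * (ε * (t * ε)⁻¹) = 1 := by field_simp
    simp only [smul_add, smul_smul, mul_div_cancel₀ _ hε.ne', hcancel, one_smul, add_assoc]

lemma norm_add_smul_le {d b : Y} {M a : ℝ} (hd : ‖d‖ ≤ M) (hb : ‖b‖ ≤ 1) (ha : 0 ≤ a) :
    ‖d + a • b‖ ≤ M + a :=
  calc ‖d + a • b‖ ≤ ‖d‖ + a * ‖b‖ := by
        simpa only [norm_smul, Real.norm_of_nonneg ha] using norm_add_le d (a • b)
    _ ≤ M + a * 1 := by gcongr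
    _ = M + a := by rw [mul_one]

open Set in
theorem IsUniformTangentSet.of_leftInverse_hasStrictFDerivAt_id {E F D : Set Y} {e₀ : Y}
    {T S : Y → Y} (hT : ContinuousAt T e₀) (hTe₀ : T e₀ = e₀) (hTF : MapsTo T F E)
    (hSE : MapsTo S E F) (hST : ∀ e ∈ F, S (T e) = e)
    (hS : HasStrictFDerivAt S (ContinuousLinearMap.id ℝ Y) e₀)
    (hD : IsUniformTangentSet E e₀ D) : IsUniformTangentSet F e₀ D := by
  obtain ⟨hbdd, hE⟩ := hD
  refine ⟨hbdd, fun ε hε => ?_⟩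
  obtain ⟨M, hM, hMD⟩ := hbdd.exists_pos_norm_le
  set η := ε / (2 * (M + ε))
  obtain ⟨s, hs, hSs⟩ := hS.approximates_deriv_on_nhds (c := η.toNNReal)
    (Or.inr (Real.toNNReal_pos.mpr (by positivity)))
  obtain ⟨ρ, hρ, hρs⟩ := nhds_basis_ball.mem_iff.mp hs
  obtain ⟨δ₁, hδ₁, hE'⟩ := hE (ε / 2) (by positivity)
  obtain ⟨δ, hδ, hTδ⟩ := Metric.continuousAt_iff.mp hT (min δ₁ (ρ / 2)) (by positivity)
  refine ⟨δ / 2, by positivity, fun d hd e he he₀ => ?_⟩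
  have hTe : ‖T e - e₀‖ < min δ₁ (ρ / 2) := by
    simpa [hTe₀, dist_eq_norm] using hTδ (by rw [dist_eq_norm]; linarith)
  obtain ⟨lam, hlam, hstep⟩ := hE' d hd (T e) (hTF he) (hTe.le.trans (min_le_left _ _))
  refine ⟨min lam (ρ / (2 * (M + ε))), by positivity, fun t ⟨ht0, htlam⟩ => ?_⟩
  obtain ⟨b, hb, hz⟩ := hstep t ⟨ht0, htlam.trans (min_le_left _ _)⟩
  set v := d + (ε / 2) • b
  have htv : ‖t • v‖ ≤ t * (M + ε) := by
    rw [norm_smul, Real.norm_of_nonneg ht0]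
    gcongr
    exact (norm_add_smul_le (hMD d hd) hb (by positivity)).trans (by linarith)
  have htv_small : t * (M + ε) ≤ ρ / 2 :=
    calc t * (M + ε) ≤ ρ / (2 * (M + ε)) * (M + ε) := by
          gcongr; exact htlam.trans (min_le_right _ _)
      _ = ρ / 2 := by field_simp
  have hTe_mem : T e ∈ ball e₀ ρ := by
    rw [mem_ball, dist_eq_norm]; linarith [min_le_right δ₁ (ρ / 2)]
  have hz_mem : T e + t • v ∈ ball e₀ ρ := by
    rw [mem_ball, dist_eq_norm, add_sub_right_comm]
    linarith [norm_add_le (T e - e₀) (t • v), min_le_right δ₁ (ρ / 2)]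
  have hw : ‖S (T e + t • v) - e - t • v‖ ≤ t * (ε / 2) := by
    have hlin := hSs _ (hρs hz_mem) _ (hρs hTe_mem)
    rw [hST e he, ContinuousLinearMap.id_apply, add_sub_cancel_left,
      Real.coe_toNNReal _ (by positivity)] at hlin
    calc _ ≤ η * ‖t • v‖ := hlin
      _ ≤ η * (t * (M + ε)) := by gcongr
      _ = t * (ε / 2) := by simp only [η]; field_simp
  obtain ⟨b', hb', heq⟩ := exists_norm_le_one_smul_add_smul_add_eq (by positivity) hε
    (add_halves ε).le ht0 d b _ hb hw
  refine ⟨b', hb', ?_⟩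
  rw [← heq, add_sub_cancel, add_sub_cancel]
  exact hSE hz

end

theorem hasStrictFDerivAt_zero_of_abs_sub_le {X : Type*} [NormedAddCommGroup X]
    [NormedSpace ℝ X] {f : X → ℝ} {x₀ : X}
    (hf : ∀ ε > (0:ℝ), ∃ δ > (0:ℝ), ∀ x y : X, ‖x - x₀‖ < δ → ‖y - x₀‖ < δ →
      |f y - f x| ≤ ε * ‖y - x‖) :
    HasStrictFDerivAt f (0 : X →L[ℝ] ℝ) x₀ := by
  refine hasStrictFDerivAt_iff_isLittleO.mpr (Asymptotics.IsLittleO.of_bound fun c hc => ?_)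
  obtain ⟨δ, hδ, hfδ⟩ := hf c hc
  filter_upwards [ball_mem_nhds (x₀, x₀) hδ] with p hp
  rw [mem_ball, Prod.dist_eq, max_lt_iff, dist_eq_norm, dist_eq_norm] at hp
  simpa using hfδ p.2 p.1 hp.2 hp.1

theorem hasStrictFDerivAt_prodMk_fst_snd_add {X F : Type*} [NormedAddCommGroup X]
    [NormedSpace ℝ X] [NormedAddCommGroup F] [NormedSpace ℝ F] {g : X → F} {x₀ : X}
    (hg : HasStrictFDerivAt g (0 : X →L[ℝ] F) x₀) (y₀ : F) :
    HasStrictFDerivAt (fun q : X × F => (q.1, q.2 + g q.1))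
      (ContinuousLinearMap.id ℝ (X × F)) (x₀, y₀) := by
  have hfst : HasStrictFDerivAt (Prod.fst : X × F → X) _ (x₀, y₀) :=
    hasStrictFDerivAt_fst (𝕜 := ℝ)
  have hsnd : HasStrictFDerivAt (Prod.snd : X × F → F) _ (x₀, y₀) :=
    hasStrictFDerivAt_snd (𝕜 := ℝ)
  refine (hfst.prodMk (hsnd.add (hg.comp (x₀, y₀) hfst))).congr_fderiv ?_
  ext <;> simp

theorem uts_epigraph_perturbation_forward_general
    {X : Type*} [NormedAddCommGroup X] [NormedSpace ℝ X]
    (φ : X → EReal)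
    (x₀ : X) (r : ℝ)
    (ψ : X → ℝ) (hψ0 : ψ x₀ = 0)
    (hψstrict : ∀ ε > (0:ℝ), ∃ δ > (0:ℝ), ∀ x y : X, ‖x - x₀‖ < δ → ‖y - x₀‖ < δ →
      |ψ y - ψ x| ≤ ε * ‖y - x‖)
    (D : Set (X × ℝ))
    (hD : IsUniformTangentSet {p : X × ℝ | φ p.1 ≤ (p.2 : EReal)} (x₀, r) D) :
    IsUniformTangentSet {p : X × ℝ | φ p.1 + (ψ p.1 : EReal) ≤ (p.2 : EReal)} (x₀, r) D := by
  have hψ' := hasStrictFDerivAt_zero_of_abs_sub_le hψstrict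
  refine IsUniformTangentSet.of_leftInverse_hasStrictFDerivAt_id
    (T := fun q => (q.1, q.2 - ψ q.1))
    (continuousAt_fst.prodMk (continuousAt_snd.sub (hψ'.continuousAt.comp continuousAt_fst)))
    (by simp [hψ0]) (fun q hq => ?_) (fun q hq => ?_) (fun q _ => by simp)
    (hasStrictFDerivAt_prodMk_fst_snd_add hψ' r) hD
  · show φ q.1 ≤ ((q.2 - ψ q.1 : ℝ) : EReal)
    rw [EReal.coe_sub,
      EReal.le_sub_iff_add_le (.inl (EReal.coe_ne_bot _)) (.inl (EReal.coe_ne_top _))]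
    exact hq
  · show φ q.1 + ψ q.1 ≤ ((q.2 + ψ q.1 : ℝ) : EReal)
    rw [EReal.coe_add]
    gcongr
    exact hq

/-- Forward direction of the epigraph perturbation lemma. -/
theorem uts_epigraph_perturbation_forward
    {X : Type*} [NormedAddCommGroup X] [NormedSpace ℝ X] [CompleteSpace X]
    (φ : X → EReal) (hφbot : ∀ x, φ x ≠ ⊥) (hlsc : LowerSemicontinuous φ)
    (x₀ : X) (r : ℝ) (hr : φ x₀ = (r : EReal))
    (ψ : X → ℝ) (hψc : Continuous ψ) (hψ0 : ψ x₀ = 0)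
    (hψstrict : ∀ ε > (0:ℝ), ∃ δ > (0:ℝ), ∀ x y : X, ‖x - x₀‖ < δ → ‖y - x₀‖ < δ →
      |ψ y - ψ x| ≤ ε * ‖y - x‖)
    (D : Set (X × ℝ))
    (hD : IsUniformTangentSet {p : X × ℝ | φ p.1 ≤ (p.2 : EReal)} (x₀, r) D) :
    IsUniformTangentSet {p : X × ℝ | φ p.1 + (ψ p.1 : EReal) ≤ (p.2 : EReal)} (x₀, r) D :=
  uts_epigraph_perturbation_forward_general φ x₀ r ψ hψ0 hψstrict D hD
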